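/- arXiv:2205.04989 — 4 statements merged into one kernel-verified Lean document; each statement's English description precedes it below -/
import Mathlib

section
/- Let G = (V,E) be a finite simple graph with vertices v_1,...,v_n, and let F = {f_1,...,f_n} be features indexed by V. Define the demonstration state s_i ⊆ F as the set of features corresponding to the closed neighborhood of v_i. Suppose p is a set of at most k transitions, each of the form ({f_j}, a) for a single fixed action a, such that for every i, some transition's feature set is contained in s_i. Then {v_j : ({f_j}, a) ∈ p} is a dominating set of G of size at most k. -/
theorem Finset.card_filter_mem_le_of_injective {α β : Type*} [DecidableEq β] {f : α → β}
    (hf : Function.Injective f) (s : Finset α) (p : Finset β) :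
    (s.filter fun x => f x ∈ p).card ≤ p.card :=
  Finset.card_le_card_of_injOn f (fun _ hx => (Finset.mem_filter.mp hx).2) hf.injOn

namespace SimpleGraph

variable {V : Type*} (G : SimpleGraph V) [Fintype V] [DecidableEq V] [DecidableRel G.Adj]

theorem mem_insert_neighborFinset_iff {u v : V} :
    u ∈ insert v (G.neighborFinset v) ↔ u = v ∨ G.Adj u v := by
  rw [Finset.mem_insert, mem_neighborFinset, G.adj_comm]

theorem mem_or_exists_adj_of_mem_insert_neighborFinset {D : Finset V} {u v : V} (hu : u ∈ D)
    (huv : u ∈ insert v (G.neighborFinset v)) : v ∈ D ∨ ∃ w ∈ D, G.Adj w v := by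
  rcases G.mem_insert_neighborFinset_iff.mp huv with rfl | hadj
  · exact Or.inl hu
  · exact Or.inr ⟨u, hu, hadj⟩

end SimpleGraph

theorem stmt_7 {V A : Type} [Fintype V] [DecidableEq V] [DecidableEq A]
    (G : SimpleGraph V) [DecidableRel G.Adj] (k : ℕ) (a : A)
    (p : Finset (Finset V × A)) (hcard : p.card ≤ k)
    (hform : ∀ tr ∈ p, ∃ j : V, tr = (({j} : Finset V), a))
    (hcover : ∀ i : V, ∃ tr ∈ p, tr.1 ⊆ insert i (G.neighborFinset i)) :
    (Finset.univ.filter (fun j : V => (({j} : Finset V), a) ∈ p)).card ≤ k ∧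
    ∀ v : V, v ∈ Finset.univ.filter (fun j : V => (({j} : Finset V), a) ∈ p) ∨
      ∃ u ∈ Finset.univ.filter (fun j : V => (({j} : Finset V), a) ∈ p), G.Adj u v := by
  have htag : Function.Injective fun j : V => (({j} : Finset V), a) :=
    (Prod.mk_left_injective a).comp Finset.singleton_injective
  refine ⟨(Finset.card_filter_mem_le_of_injective htag _ p).trans hcard, fun v => ?_⟩
  obtain ⟨tr, htr, hsub⟩ := hcover v
  obtain ⟨j, rfl⟩ := hform tr htr
  exact G.mem_or_exists_adj_of_mem_insert_neighborFinset
    (Finset.mem_filter.mpr ⟨Finset.mem_univ j, htr⟩) (hsub (Finset.mem_singleton_self j))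
end

section
/- Let G = (V,E) be a finite simple graph with a dominating set V' of size l ≤ k, and let the states s_1,...,s_n ⊆ F be the closed neighborhoods of the vertices of G (as feature sets). Then the policy p consisting of the transitions ({f}, a) for each feature f corresponding to a vertex of V' (a single fixed action a) has at most k transitions, every transition feature-set has size 1, for every state s_i at least one transition of p triggers on s_i, and all transitions that trigger on any s_i produce the same action. -/
/-!
Every vertex lies in the dominating set `D` or is adjacent to a vertex of it, so its closed
neighbourhood contains some `u ∈ D`, on which the transition `({u}, a)` triggers. Validity is
automatic because every transition of the policy carries the same action `a`.
-/

open Finset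

section SingletonPolicy

variable {V A : Type*} [DecidableEq V] [DecidableEq A]

lemma card_fst_of_mem_image_singleton {D : Finset V} {a : A} {tr : Finset V × A}
    (h : tr ∈ D.image fun v => (({v} : Finset V), a)) : tr.1.card = 1 := by
  obtain ⟨v, -, rfl⟩ := mem_image.mp h
  exact card_singleton v

lemma snd_of_mem_image_singleton {D : Finset V} {a : A} {tr : Finset V × A}
    (h : tr ∈ D.image fun v => (({v} : Finset V), a)) : tr.2 = a := by
  obtain ⟨v, -, rfl⟩ := mem_image.mp h
  rfl

lemma exists_mem_image_singleton_subset {D s : Finset V} (a : A) {u : V} (huD : u ∈ D)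
    (hus : u ∈ s) : ∃ tr ∈ D.image fun v => (({v} : Finset V), a), tr.1 ⊆ s :=
  ⟨({u}, a), mem_image_of_mem _ huD, singleton_subset_iff.mpr hus⟩

end SingletonPolicy

lemma SimpleGraph.exists_mem_insert_neighborFinset_of_dominated {V : Type*} [DecidableEq V]
    {G : SimpleGraph V} [Fintype V] [DecidableRel G.Adj] {D : Finset V} {i : V}
    (hi : i ∈ D ∨ ∃ u ∈ D, G.Adj u i) : ∃ u ∈ D, u ∈ insert i (G.neighborFinset i) := by
  rcases hi with hiD | ⟨u, huD, hui⟩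
  · exact ⟨i, hiD, mem_insert_self i _⟩
  · exact ⟨u, huD, mem_insert_of_mem ((G.mem_neighborFinset i u).mpr hui.symm)⟩

theorem stmt_8 {V A : Type} [Fintype V] [DecidableEq V] [DecidableEq A]
    (G : SimpleGraph V) [DecidableRel G.Adj] (k l : ℕ) (a : A)
    (D : Finset V) (hDcard : D.card = l) (hlk : l ≤ k)
    (hdom : ∀ v : V, v ∈ D ∨ ∃ u ∈ D, G.Adj u v) :
    let p : Finset (Finset V × A) := D.image (fun v => (({v} : Finset V), a))
    p.card ≤ k ∧
    (∀ tr ∈ p, tr.1.card = 1) ∧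
    (∀ i : V, ∃ tr ∈ p, tr.1 ⊆ insert i (G.neighborFinset i)) ∧
    (∀ i : V, ∀ tr ∈ p, ∀ tr' ∈ p,
      tr.1 ⊆ insert i (G.neighborFinset i) → tr'.1 ⊆ insert i (G.neighborFinset i) →
        tr.2 = tr'.2) := by
  refine ⟨card_image_le.trans (hDcard ▸ hlk), fun _ => card_fst_of_mem_image_singleton,
    fun i => ?_, fun _ _ htr _ htr' _ _ => ?_⟩
  · obtain ⟨u, huD, hui⟩ := G.exists_mem_insert_neighborFinset_of_dominated (hdom i)
    exact exists_mem_image_singleton_subset a huD hui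
  · rw [snd_of_mem_image_singleton htr, snd_of_mem_image_singleton htr']
end

section
/- Let G = (V,E) be a finite simple graph, F = {f_1,...,f_n, f_x}, and let states s_i = {f_x} ∪ N_C(v_i) (as feature sets) with a single action a. Then G has a dominating set of size at most k if and only if there exists a set p' of at most k transitions, each triggered by a single feature taken from {f_1,...,f_n} (not f_x), producing action a, such that every s_i triggers at least one transition of p' and no transition of p' triggers on the state {f_x}. -/
/-!
A transition `{inl v}` fires on the state `{f_x} ∪ N[i]` exactly when `v ∈ N[i]`, and never on the
state `{f_x}`. So the admissible families of transitions are precisely the images `D ↦ {{inl v} | v ∈ D}`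
of vertex sets, with the same cardinality, and such a family covers every state iff `D` dominates `G`.
-/

open Finset

lemma Finset.singleton_inl_subset_insert_inr_image_inl_iff {α β : Type*} [DecidableEq α]
    [DecidableEq β] {u : α} {b : β} {t : Finset α} :
    ({Sum.inl u} : Finset (α ⊕ β)) ⊆ insert (Sum.inr b) (t.image Sum.inl) ↔ u ∈ t := by
  simp

lemma Finset.exists_image_eq_of_forall_mem_range {α β : Type*} [DecidableEq β] {f : α → β}
    {t : Finset β} (ht : ∀ y ∈ t, ∃ x, y = f x) : ∃ s : Finset α, s.image f = t := by
  obtain ⟨s, -, hs⟩ := subset_set_image_iff.mp fun y hy => by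
    obtain ⟨x, rfl⟩ := ht y hy
    exact Set.mem_image_of_mem f (Set.mem_univ x)
  exact ⟨s, hs⟩

/-- Features are vertices `Sum.inl v` plus `f_x = Sum.inr ()`; with a single action, a transition
is identified with its triggering feature set. -/
theorem stmt_10 {V : Type} [Fintype V] [DecidableEq V]
    (G : SimpleGraph V) [DecidableRel G.Adj] (k : ℕ)
    (s : V → Finset (V ⊕ Unit))
    (hs : ∀ i : V, s i =
      insert (Sum.inr ()) ((insert i (G.neighborFinset i)).image Sum.inl)) :
    (∃ D : Finset V, D.card ≤ k ∧ ∀ v : V, v ∈ D ∨ ∃ u ∈ D, G.Adj u v) ↔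
    (∃ p' : Finset (Finset (V ⊕ Unit)), p'.card ≤ k ∧
      (∀ tr ∈ p', ∃ v : V, tr = ({Sum.inl v} : Finset (V ⊕ Unit))) ∧
      (∀ i : V, ∃ tr ∈ p', tr ⊆ s i) ∧
      (∀ tr ∈ p', ¬ tr ⊆ ({Sum.inr ()} : Finset (V ⊕ Unit)))) := by
  set single : V → Finset (V ⊕ Unit) := fun v => {Sum.inl v}
  have single_injective : Function.Injective single := fun u v h => by simpa [single] using h
  have covers_iff_dominating (D : Finset V) :
      (∀ i, ∃ tr ∈ D.image single, tr ⊆ s i) ↔ ∀ v, v ∈ D ∨ ∃ u ∈ D, G.Adj u v := by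
    simp only [exists_mem_image, single, hs,
      singleton_inl_subset_insert_inr_image_inl_iff, mem_insert, SimpleGraph.mem_neighborFinset]
    refine forall_congr' fun i => ?_
    simp only [G.adj_comm i, and_or_left, exists_or, exists_eq_right]
  constructor
  · rintro ⟨D, hk, hdom⟩
    exact ⟨D.image single, card_image_le.trans hk, by simp [single], (covers_iff_dominating D).2 hdom,
      by simp [single]⟩
  · rintro ⟨p', hk, hsingle, hcover, -⟩
    obtain ⟨D, rfl⟩ := exists_image_eq_of_forall_mem_range hsingle
    exact ⟨D, card_image_of_injective D single_injective ▸ hk, (covers_iff_dominating D).1 hcover⟩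
end

section
/- Let G = (V,E) be a finite simple graph with features F = {f_1,...,f_n, f_x}, a single action a, and a policy p with |V|+1 transitions whose i-th transition (1 ≤ i ≤ |V|) is triggered by the feature set of the closed neighborhood of v_i. Suppose p' is a set of at most k+1 transitions, each triggered by a single feature, producing action a, such that (i) some transition of p' triggers on the state {f_x}, and (ii) for every i, some transition of p' triggers on the closed-neighborhood state of v_i. Since f_x does not occur in any closed-neighborhood state, the transition triggering on {f_x} must be ({f_x}, a), and the features of the other at most k transitions correspond to a dominating set of G of size at most k. -/
theorem Finset.card_filter_singleton_inl_mem_lt {α β : Type*} [Fintype α] [DecidableEq α]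
    [DecidableEq β] {P : Finset (Finset (α ⊕ β))} {b : β} (hb : {Sum.inr b} ∈ P) :
    (univ.filter fun a : α => {Sum.inl a} ∈ P).card < P.card := by
  let embed : α ↪ Finset (α ⊕ β) :=
    ⟨fun a => {Sum.inl a}, Finset.singleton_injective.comp Sum.inl_injective⟩
  have hsub : (univ.filter fun a : α => {Sum.inl a} ∈ P).map embed ⊆ P := by
    intro t ht
    obtain ⟨a, ha, rfl⟩ := Finset.mem_map.1 ht
    exact (Finset.mem_filter.1 ha).2
  have hnotin : {Sum.inr b} ∉ (univ.filter fun a : α => {Sum.inl a} ∈ P).map embed := by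
    simp [embed]
  rw [← Finset.card_map embed]
  exact Finset.card_lt_card ((Finset.ssubset_iff_of_subset hsub).2 ⟨_, hb, hnotin⟩)

theorem SimpleGraph.mem_image_inl_insert_neighborFinset_iff {V β : Type*} [Fintype V]
    [DecidableEq V] [DecidableEq β] (G : SimpleGraph V) [DecidableRel G.Adj] (i : V)
    (f : V ⊕ β) :
    f ∈ (insert i (G.neighborFinset i)).image Sum.inl ↔
      ∃ u, f = Sum.inl u ∧ (u = i ∨ G.Adj u i) := by
  simp only [Finset.mem_image, Finset.mem_insert, SimpleGraph.mem_neighborFinset, G.adj_comm i]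
  aesop

/-- Features are vertices (`Sum.inl v`) plus the fresh feature `f_x = Sum.inr ()`; with a single
action, a transition is identified with its triggering feature set. -/
theorem stmt_13 {V : Type} [Fintype V] [DecidableEq V]
    (G : SimpleGraph V) [DecidableRel G.Adj] (k : ℕ)
    (s : V → Finset (V ⊕ Unit))
    (hs : ∀ i : V, s i = (insert i (G.neighborFinset i)).image Sum.inl)
    (p' : Finset (Finset (V ⊕ Unit)))
    (hcard : p'.card ≤ k + 1)
    (hsing : ∀ tr ∈ p', ∃ f : V ⊕ Unit, tr = ({f} : Finset (V ⊕ Unit)))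
    (hnew : ∃ tr ∈ p', tr ⊆ ({Sum.inr ()} : Finset (V ⊕ Unit)))
    (hcover : ∀ i : V, ∃ tr ∈ p', tr ⊆ s i) :
    (∀ tr ∈ p', tr ⊆ ({Sum.inr ()} : Finset (V ⊕ Unit)) →
      tr = ({Sum.inr ()} : Finset (V ⊕ Unit))) ∧
    (Finset.univ.filter (fun v : V =>
        ({Sum.inl v} : Finset (V ⊕ Unit)) ∈ p')).card ≤ k ∧
    ∀ v : V, v ∈ Finset.univ.filter (fun v : V =>
        ({Sum.inl v} : Finset (V ⊕ Unit)) ∈ p') ∨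
      ∃ u ∈ Finset.univ.filter (fun v : V =>
        ({Sum.inl v} : Finset (V ⊕ Unit)) ∈ p'), G.Adj u v := by
  have hfresh : ∀ tr ∈ p', tr ⊆ {Sum.inr ()} → tr = {Sum.inr ()} := by
    intro tr htr hsub
    obtain ⟨f, rfl⟩ := hsing tr htr
    rw [Finset.singleton_subset_singleton.1 hsub]
  refine ⟨hfresh, ?_, fun v => ?_⟩
  · obtain ⟨tr, htr, hsub⟩ := hnew
    rw [hfresh tr htr hsub] at htr
    have := Finset.card_filter_singleton_inl_mem_lt htr
    omega
  · obtain ⟨tr, htr, hsub⟩ := hcover v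
    obtain ⟨f, rfl⟩ := hsing tr htr
    rw [Finset.singleton_subset_iff, hs v, G.mem_image_inl_insert_neighborFinset_iff] at hsub
    obtain ⟨u, rfl, rfl | hadj⟩ := hsub
    · exact Or.inl (Finset.mem_filter.2 ⟨Finset.mem_univ _, htr⟩)
    · exact Or.inr ⟨u, Finset.mem_filter.2 ⟨Finset.mem_univ _, htr⟩, hadj⟩
end
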